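/- arXiv:1309.3613 — 2 statements merged into one kernel-verified Lean document; each statement's English description precedes it below -/
import Mathlib

section
/- There exists a finite constant C (depending only on α) such that for all ε ∈ (0,1): ∫₀^ε ∫₁^∞ p_s(y)² dy ds ≤ C ε³; in particular this quantity is at most C ε^{2(α−1)/α} uniformly for ε ∈ (0,1). -/
open MeasureTheory Real

/-- The symmetric α-stable heat kernel on ℝ:
`p_t(x) = (2π)⁻¹ ∫ cos(ξx) e^{−t|ξ|^α/2} dξ`. -/
noncomputable def stableKernel (α t x : ℝ) : ℝ :=
  (2 * Real.pi)⁻¹ * ∫ ξ : ℝ, Real.cos (ξ * x) * Real.exp (-(t * |ξ| ^ α) / 2)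

/-!
With `c = s / 2`, `p_s(y) = π⁻¹ ∫₀^∞ cos(xy) e^{-c x^α} dx`. Two integrations by parts give
`π p_s(y) = (cα / y²) ∫₀^∞ cos(xy) g'(x) dx` with `g(x) = x^{α-1} e^{-c x^α}`, and this last
oscillatory integral is bounded uniformly in `c ≤ 1`, `y ≥ 1` by one more integration by parts,
i.e. by the total variation of the integrand: `x^{α-2} e^{-c x^α}` is integrable near `0` and
decreasing on `[1, ∞)`, while `c x^{2α-2} e^{-c x^α}` has total variation `O(c^{(2-α)/α})`.
Hence `|p_s(y)| ≤ K s / y²` for `s ≤ 1 ≤ y`, and squaring and integrating over `y > 1`,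
`0 < s ≤ ε` gives `K² ε³ / 9`; finally `ε³ ≤ ε^{2(α-1)/α}` on `(0, 1)`.
-/

open Set Filter Topology

section Oscillatory

variable {s : Set ℝ} {a y : ℝ} {h h' : ℝ → ℝ}

lemma MeasureTheory.IntegrableOn.cos_mul (hh : IntegrableOn h s) (y : ℝ) :
    IntegrableOn (fun x => cos (x * y) * h x) s :=
  hh.bdd_mul (by fun_prop : Continuous fun x => cos (x * y)).aestronglyMeasurable
    (ae_of_all _ fun x => (norm_eq_abs _).trans_le (abs_cos_le_one _))

lemma MeasureTheory.IntegrableOn.sin_mul (hh : IntegrableOn h s) (y : ℝ) :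
    IntegrableOn (fun x => sin (x * y) * h x) s :=
  hh.bdd_mul (by fun_prop : Continuous fun x => sin (x * y)).aestronglyMeasurable
    (ae_of_all _ fun x => (norm_eq_abs _).trans_le (abs_sin_le_one _))

variable (hh : ∀ x ∈ Ioi a, HasDerivAt h (h' x) x) (hcont : ContinuousWithinAt h (Ici a) a)
  (htop : Tendsto h atTop (𝓝 0)) (hint : IntegrableOn h (Ioi a))
include hh hcont htop hint

lemma integral_Ioi_cos_mul_eq (hint' : IntegrableOn h' (Ioi a)) (hy : y ≠ 0) :
    ∫ x in Ioi a, cos (x * y) * h x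
      = -(sin (a * y) / y * h a) - (∫ x in Ioi a, sin (x * y) * h' x) / y := by
  have hv : ∀ x ∈ Ioi a, HasDerivAt (fun x => sin (x * y) / y) (cos (x * y)) x := fun x _ => by
    simpa [hy] using ((hasDerivAt_mul_const y).sin).div_const y
  have := integral_Ioi_mul_deriv_eq_deriv_mul hh hv
    (by simpa [Pi.mul_def, mul_comm] using hint.cos_mul y)
    (IntegrableOn.congr_fun ((hint'.sin_mul y).div_const y)
      (fun x _ => by simp only [Pi.mul_apply]; ring) measurableSet_Ioi)
    ((hcont.mono Ioi_subset_Ici_self).mul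
      (by fun_prop : Continuous fun x => sin (x * y) / y).continuousWithinAt)
    (htop.zero_mul_isBoundedUnder_le ⟨|y|⁻¹, eventually_map.2 (Eventually.of_forall fun x => by
      simpa [abs_div] using div_le_div_of_nonneg_right (abs_sin_le_one (x * y)) (abs_nonneg y))⟩)
  simp only [mul_comm (h _), mul_comm (h' _)] at this
  rw [this, ← integral_div]
  simp only [Pi.mul_apply, div_mul_eq_mul_div]
  ring

lemma integral_Ioi_sin_mul_eq (hint' : IntegrableOn h' (Ioi a)) (hy : y ≠ 0) :
    ∫ x in Ioi a, sin (x * y) * h x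
      = cos (a * y) / y * h a + (∫ x in Ioi a, cos (x * y) * h' x) / y := by
  have hv : ∀ x ∈ Ioi a, HasDerivAt (fun x => -(cos (x * y) / y)) (sin (x * y)) x := fun x _ => by
    refine ((((hasDerivAt_mul_const y).cos).div_const y).neg).congr_deriv ?_
    field_simp
  have := integral_Ioi_mul_deriv_eq_deriv_mul hh hv
    (by simpa [Pi.mul_def, mul_comm] using hint.sin_mul y)
    (IntegrableOn.congr_fun ((hint'.cos_mul y).div_const y).neg
      (fun x _ => by simp only [Pi.neg_apply, Pi.mul_apply]; ring) measurableSet_Ioi)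
    ((hcont.mono Ioi_subset_Ici_self).mul
      (by fun_prop : Continuous fun x => -(cos (x * y) / y)).continuousWithinAt)
    (htop.zero_mul_isBoundedUnder_le ⟨|y|⁻¹, eventually_map.2 (Eventually.of_forall fun x => by
      simpa [abs_div] using div_le_div_of_nonneg_right (abs_cos_le_one (x * y)) (abs_nonneg y))⟩)
  simp only [mul_comm (h _), mul_comm (h' _)] at this
  rw [this, ← integral_div]
  simp only [Pi.mul_apply, neg_mul, mul_neg, integral_neg, div_mul_eq_mul_div]
  ring

lemma abs_integral_Ioi_cos_mul_le (hint' : IntegrableOn h' (Ioi a)) (hy : 0 < y) :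
    |∫ x in Ioi a, cos (x * y) * h x| ≤ (|h a| + ∫ x in Ioi a, |h' x|) / y := by
  have hboundary : |sin (a * y) / y * h a| ≤ |h a| / y := by
    rw [abs_mul, abs_div, abs_of_pos hy, div_mul_eq_mul_div]
    exact div_le_div_of_nonneg_right (mul_le_of_le_one_left (abs_nonneg _) (abs_sin_le_one _))
      hy.le
  have hbulk : |∫ x in Ioi a, sin (x * y) * h' x| ≤ ∫ x in Ioi a, |h' x| :=
    norm_integral_le_of_norm_le (f := fun x => sin (x * y) * h' x) hint'.abs
      (ae_of_all _ fun x => by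
        rw [norm_mul, norm_eq_abs, norm_eq_abs]
        exact mul_le_of_le_one_left (abs_nonneg _) (abs_sin_le_one _))
  rw [integral_Ioi_cos_mul_eq hh hcont htop hint hint' hy.ne', add_div]
  calc _ ≤ |sin (a * y) / y * h a| + |(∫ x in Ioi a, sin (x * y) * h' x) / y| := by
        rw [← abs_neg (sin (a * y) / y * h a)]; exact abs_sub _ _
    _ ≤ _ := by
        rw [abs_div, abs_of_pos hy]
        gcongr

lemma abs_integral_Ioi_cos_mul_le_of_deriv_nonpos (hneg : ∀ x ∈ Ioi a, h' x ≤ 0) (hy : 0 < y) :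
    |∫ x in Ioi a, cos (x * y) * h x| ≤ 2 * |h a| / y := by
  have hvar : ∫ x in Ioi a, |h' x| = h a := by
    rw [setIntegral_congr_fun measurableSet_Ioi fun x hx => abs_of_nonpos (hneg x hx),
      integral_neg, integral_Ioi_of_hasDerivAt_of_nonpos hcont hh hneg htop]
    ring
  refine (abs_integral_Ioi_cos_mul_le hh hcont htop hint
    (integrableOn_Ioi_deriv_of_nonpos hcont hh hneg htop) hy).trans ?_
  rw [hvar]
  gcongr
  linarith [le_abs_self (h a)]

end Oscillatory

noncomputable def powExp (α c b x : ℝ) : ℝ := x ^ b * exp (-c * x ^ α)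

section PowExp

variable {α c b x : ℝ}

lemma powExp_nonneg (hx : 0 ≤ x) : 0 ≤ powExp α c b x :=
  mul_nonneg (rpow_nonneg hx b) (exp_pos _).le

lemma powExp_le_rpow (hc : 0 ≤ c) (hx : 0 ≤ x) : powExp α c b x ≤ x ^ b :=
  mul_le_of_le_one_right (rpow_nonneg hx b)
    (exp_le_one_iff.2 (by have := rpow_nonneg hx α; nlinarith))

lemma powExp_zero_of_ne (hb : b ≠ 0) : powExp α c b 0 = 0 := by
  simp [powExp, zero_rpow hb]

lemma continuous_powExp (hα : 0 ≤ α) (hb : 0 ≤ b) : Continuous (powExp α c b) := by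
  unfold powExp
  have := continuous_rpow_const (q := α) hα
  have := continuous_rpow_const (q := b) hb
  fun_prop

lemma hasDerivAt_powExp (hx : 0 < x) :
    HasDerivAt (powExp α c b) (b * powExp α c (b - 1) x - c * α * powExp α c (b + α - 1) x) x := by
  have hpow := (hasDerivAt_rpow_const (p := α) (Or.inl hx.ne')).const_mul (-c)
  refine ((hasDerivAt_rpow_const (p := b) (Or.inl hx.ne')).mul hpow.exp).congr_deriv ?_
  simp only [powExp, show b + α - 1 = b + (α - 1) by ring, rpow_add hx]
  ring

lemma integrableOn_powExp (hα : 0 < α) (hb : -1 < b) (hc : 0 < c) :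
    IntegrableOn (powExp α c b) (Ioi 0) :=
  integrableOn_rpow_mul_exp_neg_mul_rpow hb hα hc

lemma integral_powExp (hα : 0 < α) (hb : -1 < b) (hc : 0 < c) :
    ∫ x in Ioi 0, powExp α c b x = c ^ (-(b + 1) / α) * (1 / α) * Gamma ((b + 1) / α) :=
  integral_rpow_mul_exp_neg_mul_rpow hα hb hc

lemma tendsto_powExp_atTop (hα : 1 < α) (hc : 0 < c) :
    Tendsto (powExp α c b) atTop (𝓝 0) := by
  refine (rpow_mul_exp_neg_mul_rpow_isLittleO_exp_neg b hα hc).isBigO.trans_tendsto ?_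
  simpa using tendsto_id.const_mul_atTop (one_half_pos (α := ℝ))

/-- The two Gamma integrals combine since `s Γ(s) = Γ(s + 1)`. -/
lemma integral_abs_deriv_powExp_le (hα : 0 < α) (hb : 0 < b) (hc : 0 < c) :
    ∫ x in Ioi 0, |b * powExp α c (b - 1) x - c * α * powExp α c (b + α - 1) x|
      ≤ 2 * Gamma (b / α + 1) * c ^ (-(b / α)) := by
  have h₁ := integrableOn_powExp hα (show -1 < b - 1 by linarith) hc
  have h₂ := integrableOn_powExp (b := b + α - 1) hα (by linarith) hc
  calc _ ≤ ∫ x in Ioi 0, (b * powExp α c (b - 1) x + c * α * powExp α c (b + α - 1) x) := by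
        refine integral_mono_of_nonneg (ae_of_all _ fun _ => abs_nonneg _)
          ((h₁.const_mul b).add (h₂.const_mul (c * α))) ?_
        filter_upwards [ae_restrict_mem measurableSet_Ioi] with x hx
        refine (abs_sub _ _).trans_eq ?_
        rw [abs_of_nonneg (mul_nonneg hb.le (powExp_nonneg (le_of_lt hx))),
          abs_of_nonneg (mul_nonneg (by positivity) (powExp_nonneg (le_of_lt hx)))]
    _ = _ := by
        rw [integral_add (h₁.const_mul b) (h₂.const_mul (c * α)), integral_const_mul,
          integral_const_mul, integral_powExp hα (by linarith) hc,
          integral_powExp hα (by linarith) hc, Gamma_add_one (by positivity)]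
        have : -(b + α - 1 + 1) / α = -(b / α) - 1 := by field_simp; ring
        rw [this, rpow_sub_one hc.ne', show (b + α - 1 + 1) / α = b / α + 1 by field_simp; ring,
          Gamma_add_one (by positivity), show b - 1 + 1 = b by ring]
        field_simp
        ring

end PowExp

section Fourier

variable {α b c y : ℝ}

lemma stableKernel_eq_integral_Ioi (α s y : ℝ) :
    stableKernel α s y = π⁻¹ * ∫ x in Ioi 0, cos (x * y) * powExp α (s / 2) 0 x := by
  have hcos : ∀ ξ : ℝ, cos (|ξ| * y) = cos (ξ * y) := fun ξ => by
    rcases abs_choice ξ with h | h <;> simp [h, neg_mul]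
  have hfold : ∫ ξ, cos (ξ * y) * exp (-(s * |ξ| ^ α) / 2)
      = 2 * ∫ x in Ioi 0, cos (x * y) * powExp α (s / 2) 0 x := by
    rw [← integral_comp_abs (f := fun x => cos (x * y) * powExp α (s / 2) 0 x)]
    congr 1 with ξ
    simp only [powExp, rpow_zero, one_mul, hcos]
    ring_nf
  rw [stableKernel, hfold, mul_inv]
  ring

lemma integral_cos_mul_powExp_zero_eq (hα : 1 < α) (hc : 0 < c) (hy : y ≠ 0) :
    ∫ x in Ioi 0, cos (x * y) * powExp α c 0 x
      = c * α / y ^ 2 * ((α - 1) * (∫ x in Ioi 0, cos (x * y) * powExp α c (α - 2) x)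
          - c * α * ∫ x in Ioi 0, cos (x * y) * powExp α c (2 * α - 2) x) := by
  have hα0 : 0 < α := by linarith
  have hd₀ : ∀ x ∈ Ioi (0 : ℝ),
      HasDerivAt (powExp α c 0) (-(c * α) * powExp α c (α - 1) x) x := fun x hx => by
    simpa using hasDerivAt_powExp (α := α) (c := c) (b := 0) hx
  have hd₁ : ∀ x ∈ Ioi (0 : ℝ), HasDerivAt (powExp α c (α - 1))
      ((α - 1) * powExp α c (α - 2) x - c * α * powExp α c (2 * α - 2) x) x := fun x hx => by
    have := hasDerivAt_powExp (α := α) (c := c) (b := α - 1) hx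
    rwa [show α - 1 - 1 = α - 2 by ring, show α - 1 + α - 1 = 2 * α - 2 by ring] at this
  have hi : ∀ b : ℝ, -1 < b → IntegrableOn (powExp α c b) (Ioi 0) :=
    fun b hb => integrableOn_powExp hα0 hb hc
  have hi₁ := hi (α - 1) (by linarith)
  have hi₂ := hi (α - 2) (by linarith)
  have hi₃ := hi (2 * α - 2) (by linarith)
  rw [integral_Ioi_cos_mul_eq hd₀ (continuous_powExp hα0.le le_rfl).continuousWithinAt
    (tendsto_powExp_atTop hα hc) (hi 0 (by norm_num)) (hi₁.const_mul _) hy]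
  simp only [mul_left_comm (sin _), integral_const_mul]
  rw [integral_Ioi_sin_mul_eq hd₁ (continuous_powExp hα0.le (by linarith)).continuousWithinAt
    (tendsto_powExp_atTop hα hc) hi₁ ((hi₂.const_mul _).sub (hi₃.const_mul _)) hy]
  simp only [mul_sub, mul_left_comm (cos _)]
  rw [integral_sub ((hi₂.cos_mul y).const_mul _) ((hi₃.cos_mul y).const_mul _),
    integral_const_mul, integral_const_mul, powExp_zero_of_ne (by linarith : α - 1 ≠ 0)]
  simp only [zero_mul, sin_zero, zero_div, neg_zero, mul_zero, zero_add]
  ring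

lemma abs_integral_cos_mul_powExp_le (hα : 1 < α) (hb : 0 < b) (hc : 0 < c) (hy : 0 < y) :
    |∫ x in Ioi 0, cos (x * y) * powExp α c b x| ≤ 2 * Gamma (b / α + 1) * c ^ (-(b / α)) / y := by
  have hα0 : 0 < α := by linarith
  refine (abs_integral_Ioi_cos_mul_le (fun x hx => hasDerivAt_powExp hx)
    (continuous_powExp hα0.le hb.le).continuousWithinAt (tendsto_powExp_atTop hα hc)
    (integrableOn_powExp hα0 (by linarith) hc)
    (((integrableOn_powExp hα0 (by linarith) hc).const_mul _).sub
      ((integrableOn_powExp hα0 (by linarith) hc).const_mul _)) hy).trans ?_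
  rw [powExp_zero_of_ne hb.ne', abs_zero, zero_add]
  gcongr
  exact integral_abs_deriv_powExp_le hα0 hb hc

lemma abs_integral_Ioc_cos_mul_powExp_le (hα : 1 < α) (hc : 0 ≤ c) :
    |∫ x in Ioc 0 1, cos (x * y) * powExp α c (α - 2) x| ≤ 1 / (α - 1) := by
  have hrpow : ∫ x in Ioc (0 : ℝ) 1, x ^ (α - 2) = 1 / (α - 1) := by
    rw [← intervalIntegral.integral_of_le zero_le_one,
      integral_rpow (Or.inl (by linarith)), one_rpow, zero_rpow (by linarith)]
    ring_nf
  rw [← hrpow, ← norm_eq_abs]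
  refine norm_integral_le_of_norm_le (intervalIntegral.intervalIntegrable_rpow' (by linarith)).1 ?_
  filter_upwards [ae_restrict_mem measurableSet_Ioc] with x hx
  rw [norm_mul, norm_eq_abs, norm_of_nonneg (powExp_nonneg hx.1.le)]
  calc |cos (x * y)| * powExp α c (α - 2) x ≤ 1 * powExp α c (α - 2) x := by
        gcongr
        · exact powExp_nonneg hx.1.le
        · exact abs_cos_le_one _
    _ ≤ x ^ (α - 2) := (one_mul _).trans_le (powExp_le_rpow hc hx.1.le)

lemma abs_integral_Ioi_one_cos_mul_powExp_le (hα1 : 1 < α) (hα2 : α ≤ 2) (hc : 0 < c)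
    (hy : 1 ≤ y) : |∫ x in Ioi 1, cos (x * y) * powExp α c (α - 2) x| ≤ 2 := by
  have hantitone : ∀ x ∈ Ioi (1 : ℝ), (α - 2) * powExp α c (α - 2 - 1) x
      - c * α * powExp α c (α - 2 + α - 1) x ≤ 0 := fun x hx => by
    have hx0 : 0 ≤ x := by linarith [mem_Ioi.1 hx]
    have := mul_nonpos_of_nonpos_of_nonneg (by linarith : α - 2 ≤ 0)
      (powExp_nonneg (α := α) (c := c) (b := α - 2 - 1) hx0)
    have := mul_nonneg (by positivity : 0 ≤ c * α)
      (powExp_nonneg (α := α) (c := c) (b := α - 2 + α - 1) hx0)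
    linarith
  have hone : |powExp α c (α - 2) 1| ≤ 1 := by
    rw [abs_of_nonneg (powExp_nonneg zero_le_one)]
    exact (powExp_le_rpow hc.le zero_le_one).trans_eq (one_rpow _)
  refine (abs_integral_Ioi_cos_mul_le_of_deriv_nonpos
    (fun x hx => hasDerivAt_powExp (by linarith [mem_Ioi.1 hx]))
    (hasDerivAt_powExp one_pos).continuousAt.continuousWithinAt (tendsto_powExp_atTop hα1 hc)
    ((integrableOn_powExp (by linarith) (by linarith) hc).mono_set (Ioi_subset_Ioi zero_le_one))
    hantitone (by linarith)).trans ?_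
  calc 2 * |powExp α c (α - 2) 1| / y ≤ 2 * 1 / 1 := by gcongr
    _ = 2 := by norm_num

lemma abs_integral_cos_mul_powExp_sub_two_le (hα1 : 1 < α) (hα2 : α ≤ 2) (hc : 0 < c)
    (hy : 1 ≤ y) :
    |∫ x in Ioi 0, cos (x * y) * powExp α c (α - 2) x| ≤ 1 / (α - 1) + 2 := by
  have hint := (integrableOn_powExp (α := α) (b := α - 2) (by linarith) (by linarith) hc).cos_mul y
  rw [← Ioc_union_Ioi_eq_Ioi zero_le_one, setIntegral_union (Ioc_disjoint_Ioi le_rfl)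
    measurableSet_Ioi (hint.mono_set Ioc_subset_Ioi_self)
    (hint.mono_set (Ioi_subset_Ioi zero_le_one))]
  exact (abs_add_le _ _).trans (add_le_add (abs_integral_Ioc_cos_mul_powExp_le hα1 hc.le)
    (abs_integral_Ioi_one_cos_mul_powExp_le hα1 hα2 hc hy))

lemma abs_integral_cos_mul_deriv_powExp_le (hα1 : 1 < α) (hα2 : α ≤ 2) (hc : 0 < c)
    (hc1 : c ≤ 1) (hy : 1 ≤ y) :
    |(α - 1) * (∫ x in Ioi 0, cos (x * y) * powExp α c (α - 2) x)
        - c * α * ∫ x in Ioi 0, cos (x * y) * powExp α c (2 * α - 2) x|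
      ≤ 2 * α - 1 + 2 * α * Gamma ((2 * α - 2) / α + 1) := by
  have hα0 : 0 < α := by linarith
  have hnear := abs_integral_cos_mul_powExp_sub_two_le hα1 hα2 hc hy
  have hfar : c * |∫ x in Ioi 0, cos (x * y) * powExp α c (2 * α - 2) x|
      ≤ 2 * Gamma ((2 * α - 2) / α + 1) := by
    have hG : 0 ≤ Gamma ((2 * α - 2) / α + 1) :=
      (Gamma_pos_of_pos (by have : 0 < 2 * α - 2 := (by linarith); positivity)).le
    calc _ ≤ c * (2 * Gamma ((2 * α - 2) / α + 1) * c ^ (-((2 * α - 2) / α))) := by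
          gcongr
          exact (abs_integral_cos_mul_powExp_le hα1 (by linarith) hc (by linarith)).trans
            (div_le_self (by positivity) hy)
      _ = 2 * Gamma ((2 * α - 2) / α + 1) * c ^ (1 + -((2 * α - 2) / α)) := by
          rw [rpow_add hc, rpow_one]; ring
      _ ≤ 2 * Gamma ((2 * α - 2) / α + 1) * 1 := by
          gcongr
          refine rpow_le_one hc.le hc1 ?_
          rw [← sub_eq_add_neg, sub_nonneg, div_le_one hα0]
          linarith
      _ = _ := mul_one _
  calc _ ≤ |(α - 1) * ∫ x in Ioi 0, cos (x * y) * powExp α c (α - 2) x|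
        + |c * α * ∫ x in Ioi 0, cos (x * y) * powExp α c (2 * α - 2) x| := abs_sub _ _
    _ = (α - 1) * |∫ x in Ioi 0, cos (x * y) * powExp α c (α - 2) x|
        + α * (c * |∫ x in Ioi 0, cos (x * y) * powExp α c (2 * α - 2) x|) := by
        rw [abs_mul, abs_mul, abs_of_pos (by linarith : 0 < α - 1),
          abs_of_pos (by positivity : 0 < c * α)]
        ring
    _ ≤ (α - 1) * (1 / (α - 1) + 2) + α * (2 * Gamma ((2 * α - 2) / α + 1)) := by
        gcongr
    _ = _ := by
        rw [mul_add, mul_one_div_cancel (by linarith : α - 1 ≠ 0)]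
        ring

lemma abs_stableKernel_le (hα1 : 1 < α) (hα2 : α ≤ 2) :
    ∃ K, ∀ s ∈ Ioc (0 : ℝ) 1, ∀ y, 1 ≤ y → |stableKernel α s y| ≤ K * s / y ^ 2 := by
  refine ⟨α * (2 * α - 1 + 2 * α * Gamma ((2 * α - 2) / α + 1)) / 2, fun s hs y hy => ?_⟩
  have hc : 0 < s / 2 := half_pos hs.1
  rw [stableKernel_eq_integral_Ioi, integral_cos_mul_powExp_zero_eq hα1 hc (by positivity),
    abs_mul, abs_mul, abs_of_pos (inv_pos.2 pi_pos), abs_of_pos (by positivity)]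
  calc _ ≤ 1 * (s / 2 * α / y ^ 2 * (2 * α - 1 + 2 * α * Gamma ((2 * α - 2) / α + 1))) := by
        gcongr
        · exact inv_le_one_of_one_le₀ (by linarith [pi_gt_three])
        · exact abs_integral_cos_mul_deriv_powExp_le hα1 hα2 hc (by linarith [hs.2]) hy
    _ = _ := by ring

end Fourier

lemma integral_Ioi_one_sq_le {g : ℝ → ℝ} {M : ℝ} (hg : ∀ y, 1 ≤ y → |g y| ≤ M / y ^ 2) :
    ∫ y in Ioi 1, g y ^ 2 ≤ M ^ 2 / 3 := by
  have hint : IntegrableOn (fun y : ℝ => M ^ 2 * y ^ (-4 : ℝ)) (Ioi 1) :=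
    (integrableOn_Ioi_rpow_of_lt (by norm_num) one_pos).const_mul _
  calc _ ≤ ∫ y in Ioi 1, M ^ 2 * y ^ (-4 : ℝ) := by
        refine integral_mono_of_nonneg (ae_of_all _ fun _ => sq_nonneg _) hint ?_
        filter_upwards [ae_restrict_mem measurableSet_Ioi] with y hy
        have hy0 : 0 < y := one_pos.trans hy
        rw [rpow_neg hy0.le, show (4 : ℝ) = (4 : ℕ) by norm_num, rpow_natCast, ← sq_abs]
        calc |g y| ^ 2 ≤ (M / y ^ 2) ^ 2 := pow_le_pow_left₀ (abs_nonneg _) (hg y hy.le) 2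
          _ = M ^ 2 * (y ^ 4)⁻¹ := by ring
    _ = M ^ 2 / 3 := by
        rw [integral_const_mul, integral_Ioi_rpow_of_lt (by norm_num) one_pos, one_rpow]
        ring

lemma integral_Ioc_integral_Ioi_one_sq_le {f : ℝ → ℝ → ℝ} {K ε : ℝ} (hε : 0 ≤ ε)
    (hf : ∀ s ∈ Ioc 0 ε, ∀ y, 1 ≤ y → |f s y| ≤ K * s / y ^ 2) :
    ∫ s in Ioc 0 ε, ∫ y in Ioi 1, f s y ^ 2 ≤ K ^ 2 / 9 * ε ^ 3 := by
  calc _ ≤ ∫ s in Ioc 0 ε, K ^ 2 / 3 * s ^ 2 := by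
        refine integral_mono_of_nonneg (ae_of_all _ fun _ => integral_nonneg fun _ => sq_nonneg _)
          (by fun_prop : Continuous fun s : ℝ => K ^ 2 / 3 * s ^ 2).integrableOn_Ioc ?_
        filter_upwards [ae_restrict_mem measurableSet_Ioc] with s hs
        exact (integral_Ioi_one_sq_le (hf s hs)).trans_eq (by ring)
    _ = K ^ 2 / 9 * ε ^ 3 := by
        rw [integral_const_mul, ← intervalIntegral.integral_of_le hε, integral_pow]
        ring

/-- There is a finite constant `C` (depending only on `α`) such that for all
`ε ∈ (0,1)`: `∫₀^ε ∫₁^∞ p_s(y)² dy ds ≤ C ε³`; in particular this quantity is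
at most `C ε^{2(α−1)/α}` uniformly for `ε ∈ (0,1)`. -/
theorem stmt_9 (α : ℝ) (hα : α ∈ Set.Ioc (1 : ℝ) 2) :
    ∃ C : ℝ, ∀ ε ∈ Set.Ioo (0 : ℝ) 1,
      (∫ s in Set.Ioc (0 : ℝ) ε, ∫ y in Set.Ioi (1 : ℝ),
          (stableKernel α s y) ^ 2) ≤ C * ε ^ (3 : ℕ) ∧
      (∫ s in Set.Ioc (0 : ℝ) ε, ∫ y in Set.Ioi (1 : ℝ),
          (stableKernel α s y) ^ 2) ≤ C * ε ^ (2 * (α - 1) / α) := by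
  obtain ⟨K, hK⟩ := abs_stableKernel_le hα.1 hα.2
  refine ⟨K ^ 2 / 9, fun ε hε => ?_⟩
  have hcube := integral_Ioc_integral_Ioi_one_sq_le hε.1.le
    fun s hs => hK s ⟨hs.1, hs.2.trans hε.2.le⟩
  refine ⟨hcube, hcube.trans (mul_le_mul_of_nonneg_left ?_ (by positivity))⟩
  rw [← rpow_natCast]
  refine rpow_le_rpow_of_exponent_ge hε.1 hε.2.le ?_
  rw [div_le_iff₀ (by linarith [hα.1])]
  push_cast
  linarith [hα.1]
end

section
/- For every r > 0: ∫_ℝ ( p_{1+r}(y) − p_r(y) )² dy ≤ Γ(1/α) / (α r^{1/α}). -/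
/-!
`p_{1+r} - p_r` is `(2π)⁻¹` times the cosine transform of
`g(ξ) = e^{-(1+r)|ξ|^α/2} - e^{-r|ξ|^α/2}`, and `g(ξ)² ≤ e^{-r|ξ|^α}`. Plancherel's inequality
`∫ (cosine transform of g)² ≤ 2π ∫ g²` therefore bounds the left side by
`(2π)⁻¹ ∫ e^{-r|ξ|^α} dξ = Γ(1/α) / (π α r^{1/α})`.

Plancherel's inequality is proved by damping with `e^{-εy²}`: Fubini and the Gaussian cosine
integral turn the damped integral into `∫∫ g(a) g(b) K_ε(a, b)` for a nonnegative symmetric kernel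
of constant mass `2π`, which AM-GM bounds by `2π ∫ g²` (Schur's test); Fatou's lemma lets `ε → 0`.
-/

open MeasureTheory Real

theorem integral_exp_neg_mul_abs_rpow {p b : ℝ} (hp : 0 < p) (hb : 0 < b) :
    ∫ x : ℝ, exp (-b * |x| ^ p) = 2 * (b ^ (-1 / p) * Gamma (1 / p + 1)) := by
  rw [integral_comp_abs (f := fun x => exp (-b * x ^ p)), integral_exp_neg_mul_rpow hp hb]

theorem integrable_exp_neg_mul_abs_rpow {p b : ℝ} (hp : 0 < p) (hb : 0 < b) :
    Integrable fun x : ℝ => exp (-b * |x| ^ p) :=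
  .of_integral_ne_zero <| by
    rw [integral_exp_neg_mul_abs_rpow hp hb]
    have := Gamma_pos_of_pos (show 0 < 1 / p + 1 by positivity)
    positivity

theorem integral_cos_mul_mul_exp_neg_mul_sq {ε : ℝ} (hε : 0 < ε) (u : ℝ) :
    ∫ y : ℝ, cos (u * y) * exp (-ε * y ^ 2) = √(π / ε) * exp (-(4 * ε)⁻¹ * u ^ 2) := by
  have hint : Integrable fun y : ℝ => Complex.exp (Complex.I * u * y) * Complex.exp (-ε * y ^ 2) :=
    by simpa [← Complex.exp_add, add_comm] using
      integrable_cexp_quadratic (b := ε) (by simpa using hε) (Complex.I * u) 0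
  have hfourier := congrArg Complex.re (fourierIntegral_gaussian (b := ε) (by simpa using hε) u)
  have hre := integral_re hint
  simp only [RCLike.re_to_complex] at hre
  rw [← hre] at hfourier
  convert hfourier using 1
  · congr 1 with y
    rw [← Complex.exp_add, Complex.exp_re]
    simp [pow_two, mul_comm]
  · have hsqrt : ((π : ℂ) / ε) ^ (1 / 2 : ℂ) = (√(π / ε) : ℝ) := by
      rw [sqrt_eq_rpow, Complex.ofReal_cpow (by positivity)]
      push_cast
      norm_num
    rw [hsqrt, show -(u : ℂ) ^ 2 / (4 * ε) = (-(4 * ε)⁻¹ * u ^ 2 : ℝ) by push_cast; ring,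
      ← Complex.ofReal_exp, ← Complex.ofReal_mul, Complex.ofReal_re]

theorem integral_mul_mul_kernel_le {X : Type*} [MeasurableSpace X] {μ : Measure X} [SFinite μ]
    {K : X → X → ℝ} {g : X → ℝ} {C : ℝ}
    (hKm : AEStronglyMeasurable (Function.uncurry K) (μ.prod μ)) (hgm : AEStronglyMeasurable g μ)
    (hK_nonneg : ∀ a b, 0 ≤ K a b) (hK_symm : ∀ a b, K a b = K b a)
    (hK_int : ∀ a, Integrable (K a) μ) (hK_mass : ∀ a, ∫ b, K a b ∂μ = C)
    (hg : Integrable (fun a => g a ^ 2) μ) :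
    ∫ z, g z.1 * g z.2 * K z.1 z.2 ∂(μ.prod μ) ≤ C * ∫ a, g a ^ 2 ∂μ := by
  set D : X × X → ℝ := fun z => g z.1 ^ 2 * K z.1 z.2
  have hD_int : Integrable D (μ.prod μ) := by
    refine (integrable_prod_iff (f := D) ((hgm.comp_fst.pow 2).mul hKm)).2
      ⟨.of_forall fun a => (hK_int a).const_mul (g a ^ 2),
        (hg.mul_const C).congr (.of_forall fun a => ?_)⟩
    simp only [D, norm_mul, norm_pow, Real.norm_eq_abs, sq_abs, abs_of_nonneg (hK_nonneg _ _),
      integral_const_mul, hK_mass]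
  have hD_swap_int : Integrable (fun z => D z.swap) (μ.prod μ) := hD_int.swap
  have hD_swap : ∀ z : X × X, D z.swap = g z.2 ^ 2 * K z.1 z.2 := fun z => by
    simp only [D, Prod.fst_swap, Prod.snd_swap, hK_symm z.2]
  have hAM : ∀ z : X × X, g z.1 * g z.2 * K z.1 z.2 ≤ (D z + D z.swap) / 2 := fun z => by
    rw [hD_swap]
    nlinarith [mul_nonneg (hK_nonneg z.1 z.2) (sq_nonneg (g z.1 - g z.2))]
  have hsum_int : Integrable (fun z => (D z + D z.swap) / 2) (μ.prod μ) :=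
    (hD_int.add hD_swap_int).div_const 2
  have hlhs_int : Integrable (fun z => g z.1 * g z.2 * K z.1 z.2) (μ.prod μ) := by
    refine hsum_int.mono' ((hgm.comp_fst.mul hgm.comp_snd).mul hKm) (.of_forall fun z => ?_)
    rw [Real.norm_eq_abs, abs_le]
    refine ⟨?_, hAM z⟩
    rw [hD_swap]
    nlinarith [mul_nonneg (hK_nonneg z.1 z.2) (sq_nonneg (g z.1 + g z.2))]
  calc ∫ z, g z.1 * g z.2 * K z.1 z.2 ∂(μ.prod μ)
      ≤ ∫ z, (D z + D z.swap) / 2 ∂(μ.prod μ) := integral_mono hlhs_int hsum_int hAM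
    _ = ∫ z, D z ∂(μ.prod μ) := by
      rw [integral_div, integral_add hD_int hD_swap_int, integral_prod_swap D]
      ring
    _ = C * ∫ a, g a ^ 2 ∂μ := by
      simp only [integral_prod D hD_int, D, integral_const_mul, hK_mass, integral_mul_const]
      ring

noncomputable def cosTransform (g : ℝ → ℝ) (y : ℝ) : ℝ :=
  ∫ ξ, cos (ξ * y) * g ξ

theorem integrable_cos_mul_mul {g : ℝ → ℝ} (hg : Integrable g) (y : ℝ) :
    Integrable fun ξ => cos (ξ * y) * g ξ :=
  hg.bdd_mul (c := 1) (by fun_prop) (.of_forall fun _ => by simpa using abs_cos_le_one _)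

theorem abs_cos_mul_mul_le (g : ℝ → ℝ) (ξ y : ℝ) : |cos (ξ * y) * g ξ| ≤ |g ξ| := by
  simpa [abs_mul] using mul_le_of_le_one_left (abs_nonneg (g ξ)) (abs_cos_le_one (ξ * y))

theorem abs_cosTransform_le {g : ℝ → ℝ} (hg : Integrable g) (y : ℝ) :
    |cosTransform g y| ≤ ∫ ξ, |g ξ| :=
  norm_integral_le_of_norm_le (f := fun ξ => cos (ξ * y) * g ξ) hg.abs
    (.of_forall fun ξ => abs_cos_mul_mul_le g ξ y)

theorem continuous_cosTransform {g : ℝ → ℝ} (hg : Integrable g) : Continuous (cosTransform g) :=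
  continuous_of_dominated (fun y => (integrable_cos_mul_mul hg y).1)
    (fun y => .of_forall fun ξ => abs_cos_mul_mul_le g ξ y) hg.abs
    (.of_forall fun ξ => by fun_prop)

theorem integral_sqrt_mul_exp_neg_mul_sq {ε : ℝ} (hε : 0 < ε) :
    ∫ u : ℝ, √(π / ε) * exp (-(4 * ε)⁻¹ * u ^ 2) = 2 * π := by
  rw [integral_const_mul, integral_gaussian, ← sqrt_mul (by positivity),
    show π / ε * (π / (4 * ε)⁻¹) = (2 * π) ^ 2 by field_simp; ring, sqrt_sq (by positivity)]

theorem integral_sq_cosTransform_mul_exp_neg_mul_sq_le {g : ℝ → ℝ} (hg : Integrable g)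
    (hg2 : Integrable fun ξ => g ξ ^ 2) {ε : ℝ} (hε : 0 < ε) :
    ∫ y, cosTransform g y ^ 2 * exp (-ε * y ^ 2) ≤ 2 * π * ∫ ξ, g ξ ^ 2 := by
  -- `k u = ∫ cos (u y) e^{-εy²} dy`, hence `K a b = ∫ cos (a y) cos (b y) e^{-εy²} dy`
  set k : ℝ → ℝ := fun u => √(π / ε) * exp (-(4 * ε)⁻¹ * u ^ 2) with hk
  have hk_int : Integrable k := (integrable_exp_neg_mul_sq (by positivity)).const_mul _
  set K : ℝ → ℝ → ℝ := fun a b => (k (a - b) + k (a + b)) / 2 with hK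
  have hK_int : ∀ a, Integrable (K a) := fun a =>
    ((hk_int.comp_sub_left a).add (hk_int.comp_add_left a)).div_const 2
  have hK_mass : ∀ a, ∫ b, K a b = 2 * π := fun a => by
    rw [integral_div, integral_add (hk_int.comp_sub_left a) (hk_int.comp_add_left a),
      integral_sub_left_eq_self k volume a, integral_add_left_eq_self k a,
      integral_sqrt_mul_exp_neg_mul_sq hε]
    ring
  have hK_symm : ∀ a b, K a b = K b a := fun a b => by
    simp only [hK, hk, ← neg_sub a b, neg_sq, add_comm a b]
  set Φ : ℝ → ℝ × ℝ → ℝ := fun y z =>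
    g z.1 * g z.2 * (cos (z.1 * y) * cos (z.2 * y) * exp (-ε * y ^ 2)) with hΦ
  have hsq : ∀ y, cosTransform g y ^ 2 * exp (-ε * y ^ 2) = ∫ z, Φ y z ∂(volume.prod volume) :=
    fun y => by
      rw [sq, cosTransform, ← integral_prod_mul, ← integral_mul_const]
      congr 1 with z
      ring
  have hΦ_int : Integrable (Function.uncurry Φ) (volume.prod (volume.prod volume)) := by
    refine ((integrable_exp_neg_mul_sq hε).mul_prod (hg.abs.mul_prod hg.abs)).mono'
      (((hg.1.comp_fst.mul hg.1.comp_snd).comp_snd).mul (by fun_prop))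
      (.of_forall fun p => ?_)
    simp only [Function.uncurry, hΦ, norm_mul, Real.norm_eq_abs, abs_exp]
    calc |g p.2.1| * |g p.2.2| * (|cos (p.2.1 * p.1)| * |cos (p.2.2 * p.1)| * exp (-ε * p.1 ^ 2))
        ≤ |g p.2.1| * |g p.2.2| * (1 * 1 * exp (-ε * p.1 ^ 2)) := by
          gcongr <;> exact abs_cos_le_one _
      _ = exp (-ε * p.1 ^ 2) * (|g p.2.1| * |g p.2.2|) := by ring
  have hcos_int : ∀ u, Integrable fun y => cos (u * y) * exp (-ε * y ^ 2) := fun u =>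
    (integrable_exp_neg_mul_sq hε).bdd_mul (c := 1) (by fun_prop)
      (.of_forall fun _ => by simpa using abs_cos_le_one _)
  have hΦ_y : ∀ z : ℝ × ℝ, ∫ y, Φ y z = g z.1 * g z.2 * K z.1 z.2 := fun ⟨a, b⟩ => by
    have hprod : ∀ y, cos (a * y) * cos (b * y) * exp (-ε * y ^ 2)
        = (cos ((a - b) * y) * exp (-ε * y ^ 2) + cos ((a + b) * y) * exp (-ε * y ^ 2)) / 2 :=
      fun y => by rw [sub_mul, add_mul, ← add_mul, ← two_mul_cos_mul_cos]; ring
    simp only [hΦ, hprod, integral_const_mul, integral_div,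
      integral_add (hcos_int _) (hcos_int _), integral_cos_mul_mul_exp_neg_mul_sq hε, hK, hk]
  calc ∫ y, cosTransform g y ^ 2 * exp (-ε * y ^ 2)
      = ∫ z, ∫ y, Φ y z ∂volume ∂(volume.prod volume) := by
        simp only [hsq]
        exact integral_integral_swap hΦ_int
    _ = ∫ z, g z.1 * g z.2 * K z.1 z.2 ∂(volume.prod volume) := by simp only [hΦ_y]
    _ ≤ 2 * π * ∫ ξ, g ξ ^ 2 :=
        integral_mul_mul_kernel_le (by fun_prop) hg.1 (fun a b => by positivity) hK_symm hK_int
          hK_mass hg2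

open Filter Topology in
theorem integral_le_of_forall_integral_mul_exp_neg_mul_sq_le {h : ℝ → ℝ} {M B : ℝ}
    (hm : Measurable h) (h_nonneg : ∀ y, 0 ≤ h y) (h_le : ∀ y, h y ≤ M)
    (hB : ∀ ε > 0, ∫ y, h y * exp (-ε * y ^ 2) ≤ B) :
    ∫ y, h y ≤ B := by
  have hint : ∀ ε > 0, Integrable fun y => h y * exp (-ε * y ^ 2) := fun ε hε =>
    (integrable_exp_neg_mul_sq hε).bdd_mul hm.aestronglyMeasurable
      (.of_forall fun y => by simpa [abs_of_nonneg (h_nonneg y)] using h_le y)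
  have hprod_nonneg : ∀ ε y, 0 ≤ h y * exp (-ε * y ^ 2) := fun ε y =>
    mul_nonneg (h_nonneg y) (exp_pos _).le
  have hB_nonneg : 0 ≤ B := (integral_nonneg (hprod_nonneg 1)).trans (hB 1 one_pos)
  have hlim : ∀ y, Tendsto (fun ε => ENNReal.ofReal (h y * exp (-ε * y ^ 2))) (𝓝[>] 0)
      (𝓝 (ENNReal.ofReal (h y))) := fun y =>
    (ENNReal.continuous_ofReal.comp (by fun_prop : Continuous fun ε => h y * exp (-ε * y ^ 2))
      |>.tendsto' 0 _ (by simp)).mono_left nhdsWithin_le_nhds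
  have hlint : ∫⁻ y, ENNReal.ofReal (h y) ≤ ENNReal.ofReal B :=
    calc ∫⁻ y, ENNReal.ofReal (h y)
        = ∫⁻ y, liminf (fun ε => ENNReal.ofReal (h y * exp (-ε * y ^ 2))) (𝓝[>] 0) := by
          congr with y
          exact (hlim y).liminf_eq.symm
      _ ≤ liminf (fun ε => ∫⁻ y, ENNReal.ofReal (h y * exp (-ε * y ^ 2))) (𝓝[>] 0) :=
          lintegral_liminf_le fun ε => by fun_prop
      _ ≤ ENNReal.ofReal B := by
          refine liminf_le_of_frequently_le' (Eventually.frequently ?_)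
          filter_upwards [self_mem_nhdsWithin] with ε hε
          rw [← ofReal_integral_eq_lintegral_ofReal (hint ε hε) (.of_forall (hprod_nonneg ε))]
          exact ENNReal.ofReal_le_ofReal (hB ε hε)
  rw [integral_eq_lintegral_of_nonneg_ae (.of_forall h_nonneg) hm.aestronglyMeasurable]
  exact ENNReal.toReal_le_of_le_ofReal hB_nonneg hlint

theorem integral_sq_cosTransform_le {g : ℝ → ℝ} (hg : Integrable g)
    (hg2 : Integrable fun ξ => g ξ ^ 2) :
    ∫ y, cosTransform g y ^ 2 ≤ 2 * π * ∫ ξ, g ξ ^ 2 :=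
  integral_le_of_forall_integral_mul_exp_neg_mul_sq_le
    ((continuous_cosTransform hg).pow 2).measurable (fun _ => sq_nonneg _)
    (fun y => by
      rw [← sq_abs]
      exact pow_le_pow_left₀ (abs_nonneg _) (abs_cosTransform_le hg y) 2)
    (fun _ hε => integral_sq_cosTransform_mul_exp_neg_mul_sq_le hg hg2 hε)

theorem integrable_exp_neg_mul_abs_rpow_div_two {p t : ℝ} (hp : 0 < p) (ht : 0 < t) :
    Integrable fun ξ : ℝ => exp (-(t * |ξ| ^ p) / 2) :=
  (integrable_exp_neg_mul_abs_rpow hp (half_pos ht)).congr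
    (.of_forall fun ξ => by simp only [neg_div, neg_mul, mul_div_right_comm])

theorem stableKernel_sub_stableKernel {α s t : ℝ} (hα : 0 < α) (hs : 0 < s) (ht : 0 < t)
    (y : ℝ) :
    stableKernel α t y - stableKernel α s y
      = (2 * π)⁻¹ *
          cosTransform (fun ξ => exp (-(t * |ξ| ^ α) / 2) - exp (-(s * |ξ| ^ α) / 2)) y := by
  rw [stableKernel, stableKernel, ← mul_sub, cosTransform, ← integral_sub
    (integrable_cos_mul_mul (integrable_exp_neg_mul_abs_rpow_div_two hα ht) y)
    (integrable_cos_mul_mul (integrable_exp_neg_mul_abs_rpow_div_two hα hs) y)]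
  simp only [mul_sub]

theorem sq_exp_sub_exp_le {a s t : ℝ} (ha : 0 ≤ a) (hst : s ≤ t) :
    (exp (-(t * a) / 2) - exp (-(s * a) / 2)) ^ 2 ≤ exp (-s * a) := by
  have hle : exp (-(t * a) / 2) ≤ exp (-(s * a) / 2) := exp_le_exp.2 (by nlinarith)
  have hsq : exp (-(s * a) / 2) ^ 2 = exp (-s * a) := by rw [← exp_nat_mul]; ring_nf
  nlinarith [exp_pos (-(t * a) / 2)]

/-- For every `r > 0`: `∫_ℝ (p_{1+r}(y) − p_r(y))² dy ≤ Γ(1/α)/(α r^{1/α})`. -/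
theorem stmt_13 (α : ℝ) (hα : α ∈ Set.Ioc (1 : ℝ) 2) (r : ℝ) (hr : 0 < r) :
    (∫ y : ℝ, (stableKernel α (1 + r) y - stableKernel α r y) ^ 2)
      ≤ Real.Gamma (1 / α) / (α * r ^ (1 / α)) := by
  have hα0 : 0 < α := one_pos.trans hα.1
  set g : ℝ → ℝ := fun ξ => exp (-((1 + r) * |ξ| ^ α) / 2) - exp (-(r * |ξ| ^ α) / 2)
  have hg : Integrable g := (integrable_exp_neg_mul_abs_rpow_div_two hα0 (by positivity)).sub
    (integrable_exp_neg_mul_abs_rpow_div_two hα0 hr)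
  have hg_sq : ∀ ξ, g ξ ^ 2 ≤ exp (-r * |ξ| ^ α) := fun ξ =>
    sq_exp_sub_exp_le (by positivity) (by linarith)
  have hg2 : Integrable fun ξ => g ξ ^ 2 :=
    (integrable_exp_neg_mul_abs_rpow hα0 hr).mono' (hg.1.pow 2)
      (.of_forall fun ξ => by simpa using hg_sq ξ)
  calc (∫ y, (stableKernel α (1 + r) y - stableKernel α r y) ^ 2)
      = (2 * π)⁻¹ ^ 2 * ∫ y, cosTransform g y ^ 2 := by
        simp only [stableKernel_sub_stableKernel hα0 hr (by positivity : 0 < 1 + r), mul_pow,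
          integral_const_mul, g]
    _ ≤ (2 * π)⁻¹ ^ 2 * (2 * π * ∫ ξ, exp (-r * |ξ| ^ α)) := by
        gcongr
        exact (integral_sq_cosTransform_le hg hg2).trans
          (mul_le_mul_of_nonneg_left
            (integral_mono hg2 (integrable_exp_neg_mul_abs_rpow hα0 hr) hg_sq) (by positivity))
    _ = Gamma (1 / α) / (α * r ^ (1 / α)) / π := by
        rw [integral_exp_neg_mul_abs_rpow hα0 hr, Gamma_add_one (by positivity),
          show -1 / α = -(1 / α) by ring, rpow_neg hr.le]
        field_simp
    _ ≤ Gamma (1 / α) / (α * r ^ (1 / α)) :=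
        div_le_self (by have := Gamma_pos_of_pos (one_div_pos.2 hα0); positivity)
          (by linarith [pi_gt_three])
end
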